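/- arXiv:2508.05931 — 5 statements merged into one kernel-verified Lean document; each statement's English description precedes it below -/
import Mathlib

section
/- Let n be a positive integer and let E be a subset of ℝⁿ whose interior (in ℝⁿ) is empty. Then every continuous map f : E → ℝⁿ is a uniform limit of continuous maps g : E → ℝⁿ satisfying g(x) ≠ 0 for all x ∈ E; that is, for every ε > 0 there exists a continuous zero-free g : E → ℝⁿ with sup_{x ∈ E} |f(x) − g(x)| < ε. -/
open Set Metric TopologicalSpace
open scoped Manifold

lemma exists_CLE_of_det_ne_zero
    {X : Type*} [NormedAddCommGroup X] [NormedSpace ℝ X] [FiniteDimensional ℝ X]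
    (A : X →L[ℝ] X) (hA : A.det ≠ 0) :
    ∃ A' : X ≃L[ℝ] X, (A' : X →L[ℝ] X) = A := by
  refine ⟨((A : X →ₗ[ℝ] X).equivOfDetNeZero hA).toContinuousLinearEquiv, ?_⟩
  ext x; rfl

lemma smooth_approx {X : Type*} [NormedAddCommGroup X] [NormedSpace ℝ X]
    [FiniteDimensional ℝ X]
    (E : Set X) (f : E → X) (hf : Continuous f) {δ : ℝ} (hδ : 0 < δ) :
    ∃ (U : Set X) (G : X → X), IsOpen U ∧ E ⊆ U ∧ (∀ x ∈ U, ContDiffAt ℝ 1 G x) ∧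
      ∀ p : E, ‖G ↑p - f p‖ ≤ δ := by
  classical
  rcases E.eq_empty_or_nonempty with hE | hE
  · refine ⟨univ, 0, isOpen_univ, subset_univ _, fun x _ => contDiffAt_const, fun p => ?_⟩
    exact absurd p.2 (by simp [hE])
  have hr : ∀ p : E, ∃ r : ℝ, 0 < r ∧ ∀ q : E, dist (q : X) (p : X) < 2 * r →
      dist (f q) (f p) ≤ δ := by
    intro p
    obtain ⟨r', hr', H⟩ := Metric.continuous_iff.mp hf p δ hδ
    refine ⟨r' / 2, by linarith, fun q hq => ?_⟩
    have hq2 : dist q p < r' := by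
      rw [Subtype.dist_eq]
      calc dist (q:X) (p:X) < 2 * (r'/2) := hq
        _ = r' := by ring
    exact (H q hq2).le
  choose r hr0 hrd using hr
  set U : Set X := ⋃ p : E, ball (p : X) (r p) with hUdef
  have hUo : IsOpen U := isOpen_iUnion fun _ => isOpen_ball
  have hEU : E ⊆ U := fun x hx =>
    mem_iUnion.2 ⟨⟨x, hx⟩, mem_ball_self (hr0 ⟨x, hx⟩)⟩
  set Uo : Opens X := ⟨U, hUo⟩ with hUodef
  haveI : Nonempty ↥Uo := ⟨⟨hE.choose, hEU hE.choose_spec⟩⟩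
  haveI : LocallyCompactSpace ↥(U : Set X) := hUo.locallyCompactSpace
  haveI : LocallyCompactSpace ↥Uo := ‹LocallyCompactSpace ↥(U : Set X)›
  haveI : SigmaCompactSpace ↥Uo := inferInstance
  set t : ↥Uo → Set X := fun y => {v | ∀ h : (y : X) ∈ E, v ∈ closedBall (f ⟨y, h⟩) δ}
    with htdef
  have hconv : ∀ y, Convex ℝ (t y) := by
    intro y
    by_cases h : (y : X) ∈ E
    · have : t y = closedBall (f ⟨y, h⟩) δ := by
        ext v; simp only [htdef, mem_setOf_eq]
        exact ⟨fun H => H h, fun H _ => H⟩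
      rw [this]; exact convex_closedBall _ _
    · have : t y = univ := by
        ext v; simp only [htdef, mem_setOf_eq, mem_univ, iff_true]
        exact fun hh => absurd hh h
      rw [this]; exact convex_univ
  have Hloc : ∀ y : ↥Uo, ∃ W ∈ nhds y, ∃ g : ↥Uo → X,
      ContMDiffOn 𝓘(ℝ, X) 𝓘(ℝ, X) ((⊤ : ℕ∞) : WithTop ℕ∞) g W ∧ ∀ z ∈ W, g z ∈ t z := by
    intro y
    have hyU : (y : X) ∈ U := y.2
    obtain ⟨p, hp⟩ := mem_iUnion.1 hyU
    refine ⟨Subtype.val ⁻¹' ball (p : X) (r p),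
      (isOpen_ball.preimage continuous_subtype_val).mem_nhds hp, fun _ => f p,
      contMDiffOn_const, fun z hz => ?_⟩
    intro h
    have : dist (z : X) (p : X) < 2 * r p := by
      have := (mem_preimage.1 hz)
      rw [mem_ball] at this
      nlinarith [hr0 p, this]
    have := hrd p ⟨(z : X), h⟩ this
    rw [mem_closedBall, dist_comm]
    exact this
  obtain ⟨F₀, hF₀⟩ := exists_contMDiffMap_forall_mem_convex_of_local 𝓘(ℝ, X) hconv Hloc
  set G : X → X := fun x => if h : x ∈ U then F₀ ⟨x, h⟩ else 0 with hGdef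
  have hGeq : (fun x : ↥Uo => G ↑x) = ⇑F₀ := by
    funext x
    exact dif_pos x.2
  refine ⟨U, G, hUo, hEU, ?_, ?_⟩
  · intro y hy
    have h1 : ContMDiffAt 𝓘(ℝ, X) 𝓘(ℝ, X) ((⊤ : ℕ∞) : WithTop ℕ∞) (fun x : ↥Uo => G ↑x) ⟨y, hy⟩ := by
      rw [hGeq]; exact F₀.contMDiff _
    exact ((contMDiffAt_subtype_iff.mp h1).contDiffAt).of_le (by exact_mod_cast le_top)
  · intro p
    have hpU : (p : X) ∈ U := hEU p.2
    have := hF₀ ⟨(p : X), hpU⟩ p.2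
    have hval : G ↑p = F₀ ⟨(p : X), hpU⟩ := by simp only [hGdef]; rw [dif_pos hpU]
    rw [mem_closedBall] at this
    rw [hval, ← dist_eq_norm]
    convert this using 3

lemma continuousAt_of_eq_nhds {α β : Type*} [TopologicalSpace α] [TopologicalSpace β]
    {f g : α → β} {x : α} (hf : ContinuousAt f x) {V : Set α} (hV : V ∈ nhds x)
    (heq : ∀ y ∈ V, g y = f y) : ContinuousAt g x := by
  have h1 : f =ᶠ[nhds x] g := Filter.eventuallyEq_of_mem hV fun y hy => (heq y hy).symm
  have hx : g x = f x := heq x (mem_of_mem_nhds hV)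
  unfold ContinuousAt at *
  rw [hx]
  exact hf.congr' h1

set_option maxHeartbeats 1000000 in
/-- If `E ⊆ ℝⁿ` has empty interior, then every continuous map `f : E → ℝⁿ`
is a uniform limit of continuous zero-free maps `g : E → ℝⁿ`. -/
theorem zeroFree_approximation_of_empty_interior (n : ℕ) (hn : 0 < n)
    (E : Set (EuclideanSpace ℝ (Fin n))) (hE : interior E = ∅)
    (f : E → EuclideanSpace ℝ (Fin n)) (hf : Continuous f)
    (ε : ℝ) (hε : 0 < ε) :
    ∃ g : E → EuclideanSpace ℝ (Fin n), Continuous g ∧ (∀ x : E, g x ≠ 0) ∧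
      ∀ x : E, ‖f x - g x‖ < ε := by
  classical
  rcases E.eq_empty_or_nonempty with hEe | hEne
  · refine ⟨f, hf, fun x => absurd x.2 (by simp [hEe]), fun x => absurd x.2 (by simp [hEe])⟩
  set δ := ε / 4 with hδdef
  have hδ : 0 < δ := by positivity
  obtain ⟨U, G, hUo, hEU, hGc, hGf⟩ := smooth_approx E f hf hδ
  have hGcont : ContinuousOn G U := fun x hx => ((hGc x hx).continuousAt).continuousWithinAt
  set D := fderiv ℝ G with hDdef
  -- critical set
  set Crit := U ∩ (fun x => (D x).det) ⁻¹' {0} with hCritdef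
  have hCritm : MeasurableSet Crit :=
    hUo.measurableSet.inter
      ((ContinuousLinearMap.continuous_det.measurable.comp (measurable_fderiv ℝ G))
        (measurableSet_singleton 0))
  have himg : MeasureTheory.volume (G '' Crit) = 0 := by
    have h' : ∀ x ∈ Crit, HasFDerivWithinAt G (D x) Crit x := fun x hx =>
      (((hGc x hx.1).differentiableAt one_ne_zero).hasFDerivAt).hasFDerivWithinAt
    refine le_antisymm ?_ zero_le
    refine le_trans
      (MeasureTheory.addHaar_image_le_lintegral_abs_det_fderiv MeasureTheory.volume hCritm h') ?_
    have : ∀ x ∈ Crit, ENNReal.ofReal |(D x).det| = 0 := by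
      intro x hx
      have : (D x).det = 0 := hx.2
      simp [this]
    rw [MeasureTheory.setLIntegral_congr_fun hCritm this]
    simp
  -- regular value c
  obtain ⟨c, hcδ, hcCrit⟩ : ∃ c : EuclideanSpace ℝ (Fin n), ‖c‖ < δ ∧ c ∉ G '' Crit := by
    by_contra hcon
    push_neg at hcon
    have hsub : ball (0 : EuclideanSpace ℝ (Fin n)) δ ⊆ G '' Crit := by
      intro v hv
      exact hcon v (by rwa [mem_ball_zero_iff] at hv)
    have hle : MeasureTheory.volume (ball (0 : EuclideanSpace ℝ (Fin n)) δ) ≤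
        MeasureTheory.volume (G '' Crit) := MeasureTheory.measure_mono hsub
    rw [himg] at hle
    exact absurd (le_antisymm hle zero_le) (measure_ball_pos MeasureTheory.volume 0 hδ).ne'
  -- zero set
  set Z := {x | x ∈ U ∧ G x = c} with hZdef
  have hZdet : ∀ z ∈ Z, (D z).det ≠ 0 := by
    intro z hz h0
    exact hcCrit ⟨z, ⟨hz.1, h0⟩, hz.2⟩
  -- injectivity neighborhoods
  have hSex : ∀ z : EuclideanSpace ℝ (Fin n), ∃ S : Set (EuclideanSpace ℝ (Fin n)), z ∈ Z →
      IsOpen S ∧ z ∈ S ∧ S ⊆ U ∧ Set.InjOn G S := by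
    intro z
    by_cases hz : z ∈ Z
    · obtain ⟨A', hA'⟩ := exists_CLE_of_det_ne_zero (D z) (hZdet z hz)
      have hstrict : HasStrictFDerivAt G ((A' : EuclideanSpace ℝ (Fin n) ≃L[ℝ] EuclideanSpace ℝ (Fin n)) : EuclideanSpace ℝ (Fin n) →L[ℝ] EuclideanSpace ℝ (Fin n)) z := by
        rw [hA']
        exact (hGc z hz.1).hasStrictFDerivAt one_ne_zero
      set e := hstrict.toOpenPartialHomeomorph G with hedef
      refine ⟨e.source ∩ U, fun _ => ⟨e.open_source.inter hUo, ⟨?_, hz.1⟩,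
        inter_subset_right, ?_⟩⟩
      · exact hstrict.mem_toOpenPartialHomeomorph_source
      · have : Set.InjOn G e.source := by
          have := e.injOn
          rwa [hstrict.toOpenPartialHomeomorph_coe] at this
        exact this.mono inter_subset_left
    · exact ⟨∅, fun h => absurd h hz⟩
  choose S hS using hSex
  have hUZopen : IsOpen (U ∩ G ⁻¹' ({c}ᶜ)) :=
    hGcont.isOpen_inter_preimage hUo (isOpen_compl_singleton)
  have hUZeq : U ∩ G ⁻¹' ({c}ᶜ) = U \ Z := by
    ext x; simp only [hZdef, mem_inter_iff, mem_preimage, mem_compl_iff, mem_singleton_iff,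
      mem_diff, mem_setOf_eq]
    tauto
  -- radii
  have hρex : ∀ z : EuclideanSpace ℝ (Fin n), ∃ ρ : ℝ, z ∈ Z → (0 < ρ ∧ closedBall z ρ ⊆ S z ∧
      ∀ w ∈ (Z \ {z}) ∪ Uᶜ, 5 * ρ ≤ dist z w) := by
    intro z
    by_cases hz : z ∈ Z
    · obtain ⟨hSo, hzS, hSU, hSinj⟩ := hS z hz
      obtain ⟨r₀, hr₀, hball⟩ := Metric.isOpen_iff.mp hSo z hzS
      have hBc : IsClosed ((Z \ {z}) ∪ Uᶜ) := by
        rw [← isOpen_compl_iff]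
        have hcompl : ((Z \ {z}) ∪ Uᶜ)ᶜ = (U \ Z) ∪ {z} := by
          ext x
          simp only [mem_compl_iff, mem_union, mem_diff, mem_singleton_iff, not_or, not_and,
            not_not]
          constructor
          · rintro ⟨h1, h2⟩
            by_cases hxz : x = z
            · exact Or.inr hxz
            · exact Or.inl ⟨h2, fun hxZ => hxz (h1 hxZ)⟩
          · rintro (⟨hxU, hxZ⟩ | rfl)
            · exact ⟨fun h => absurd h hxZ, hxU⟩
            · exact ⟨fun _ => rfl, hz.1⟩
        rw [hcompl]
        rw [isOpen_iff_mem_nhds]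
        rintro x (⟨hxU, hxZ⟩ | hx1)
        · have : x ∈ U ∩ G ⁻¹' ({c}ᶜ) := by
            rw [hUZeq]; exact ⟨hxU, hxZ⟩
          exact Filter.mem_of_superset (hUZopen.mem_nhds this)
            (by rw [hUZeq]; exact fun y hy => Or.inl hy)
        · have hxz : x = z := hx1
          subst hxz
          refine Filter.mem_of_superset (Metric.ball_mem_nhds x hr₀) ?_
          intro w hw
          by_cases hwz : w = x
          · exact Or.inr hwz
          · left
            refine ⟨hSU (hball hw), fun hwZ => hwz ?_⟩
            exact hSinj (hball hw) hzS (by rw [hwZ.2, hz.2])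
      rcases ((Z \ {z}) ∪ Uᶜ).eq_empty_or_nonempty with hBe | hBne
      · refine ⟨r₀ / 2, fun _ => ⟨by linarith, ?_, ?_⟩⟩
        · exact subset_trans (closedBall_subset_ball (by linarith)) hball
        · intro w hw; rw [hBe] at hw; exact absurd hw (notMem_empty w)
      · have hzB : z ∉ (Z \ {z}) ∪ Uᶜ := by
          rintro (h | h)
          · exact h.2 rfl
          · exact h hz.1
        have hd : 0 < Metric.infDist z ((Z \ {z}) ∪ Uᶜ) :=
          (hBc.notMem_iff_infDist_pos hBne).mp hzB
        refine ⟨min (r₀ / 2) (Metric.infDist z ((Z \ {z}) ∪ Uᶜ) / 5), fun _ =>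
          ⟨lt_min (by linarith) (by linarith), ?_, ?_⟩⟩
        · refine subset_trans (closedBall_subset_ball ?_) hball
          exact lt_of_le_of_lt (min_le_left _ _) (by linarith)
        · intro w hw
          have h1 : 5 * min (r₀ / 2) (Metric.infDist z ((Z \ {z}) ∪ Uᶜ) / 5) ≤
              Metric.infDist z ((Z \ {z}) ∪ Uᶜ) := by
            have := min_le_right (r₀ / 2) (Metric.infDist z ((Z \ {z}) ∪ Uᶜ) / 5)
            linarith
          exact le_trans h1 (Metric.infDist_le_dist_of_mem hw)
    · exact ⟨1, fun h => absurd h hz⟩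
  choose ρ hρ using hρex
  -- perturbation vectors
  have hczex : ∀ z : EuclideanSpace ℝ (Fin n), ∃ v : EuclideanSpace ℝ (Fin n), z ∈ Z →
      (‖v‖ ≤ δ ∧ (∀ x ∈ E ∩ closedBall z (ρ z), G x - c ≠ v) ∧
        ∀ x ∈ closedBall z (ρ z) \ ball z (ρ z / 2), ‖v‖ < ‖G x - c‖) := by
    intro z
    by_cases hz : z ∈ Z
    · obtain ⟨hρ0, hρS, hρdist⟩ := hρ z hz
      obtain ⟨hSo, hzS, hSU, hSinj⟩ := hS z hz
      have hcbU : closedBall z (ρ z) ⊆ U := subset_trans hρS hSU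
      set A := closedBall z (ρ z) \ ball z (ρ z / 2) with hAdef
      have hAcp : IsCompact A := (isCompact_closedBall z (ρ z)).diff isOpen_ball
      have hAne : A.Nonempty := by
        refine ⟨z + (ρ z) • EuclideanSpace.single ⟨0, hn⟩ (1 : ℝ), ?_, ?_⟩
        · rw [mem_closedBall, dist_eq_norm, add_sub_cancel_left, norm_smul,
            EuclideanSpace.norm_single]
          simp [abs_of_pos hρ0]
        · rw [mem_ball, dist_eq_norm, add_sub_cancel_left, norm_smul,
            EuclideanSpace.norm_single]
          simp [abs_of_pos hρ0]
          linarith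
      obtain ⟨x₀, hx₀A, hx₀min⟩ := hAcp.exists_isMinOn hAne
        (((hGcont.mono (subset_trans diff_subset hcbU)).sub continuousOn_const).norm)
      set m := ‖G x₀ - c‖ with hmdef
      have hm : 0 < m := by
        rw [hmdef, norm_pos_iff]
        intro h0
        have hx₀Z : x₀ ∈ Z := ⟨hcbU hx₀A.1, sub_eq_zero.mp h0⟩
        have : x₀ = z := hSinj (hρS hx₀A.1) hzS (by rw [hx₀Z.2, hz.2])
        rw [this] at hx₀A
        exact hx₀A.2 (mem_ball_self (by linarith))
      set Img := (fun x => G x - c) '' (E ∩ closedBall z (ρ z)) with hImgdef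
      have hImgint : interior Img = ∅ := by
        by_contra hne2
        obtain ⟨y₀, hy₀⟩ := Set.nonempty_iff_ne_empty.2 hne2
        set W := S z ∩ (fun x => G x - c) ⁻¹' (interior Img) with hWdef
        have hWo : IsOpen W := ((hGcont.mono hSU).sub continuousOn_const).isOpen_inter_preimage
          hSo isOpen_interior
        obtain ⟨x₁, ⟨hx₁E, hx₁B⟩, hx₁eq⟩ := interior_subset hy₀
        have hx₁W : x₁ ∈ W := by
          refine ⟨hρS hx₁B, ?_⟩
          rw [mem_preimage]
          show G x₁ - c ∈ interior Img
          have heq1 : G x₁ - c = y₀ := hx₁eq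
          rw [heq1]; exact hy₀
        have hWE : W ⊆ E := by
          rintro w ⟨hwS, hwpre⟩
          have hw2 : G w - c ∈ Img := interior_subset (mem_preimage.1 hwpre)
          obtain ⟨x₂, ⟨hx₂E, hx₂B⟩, heq2⟩ := hw2
          have heq3 : G x₂ = G w := by
            have h4 : G x₂ - c = G w - c := heq2
            exact sub_left_injective h4
          have h5 : x₂ = w := hSinj (hρS hx₂B) hwS heq3
          rw [← h5]; exact hx₂E
        have : x₁ ∈ interior E := interior_maximal hWE hWo hx₁W
        rw [hE] at this
        exact this
      have hvex : ∃ v : EuclideanSpace ℝ (Fin n), ‖v‖ < min δ m ∧ v ∉ Img := by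
        by_contra hcon2
        push_neg at hcon2
        have hsub2 : ball (0 : EuclideanSpace ℝ (Fin n)) (min δ m) ⊆ Img := fun v hv =>
          hcon2 v (by rwa [mem_ball_zero_iff] at hv)
        have : ball (0 : EuclideanSpace ℝ (Fin n)) (min δ m) ⊆ interior Img :=
          interior_maximal hsub2 isOpen_ball
        have h0 : (0 : EuclideanSpace ℝ (Fin n)) ∈ interior Img :=
          this (mem_ball_self (lt_min hδ hm))
        rw [hImgint] at h0
        exact h0
      obtain ⟨v, hv1, hv2⟩ := hvex
      refine ⟨v, fun _ => ⟨le_trans hv1.le (min_le_left _ _), ?_, ?_⟩⟩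
      · intro x hx heq2
        exact hv2 ⟨x, hx, heq2⟩
      · intro x hxA
        exact lt_of_lt_of_le (lt_of_lt_of_le hv1 (min_le_right _ _)) (hx₀min hxA)
    · exact ⟨0, fun h => absurd h hz⟩
  choose cz hcz using hczex
  -- bump functions
  set Φ : EuclideanSpace ℝ (Fin n) → EuclideanSpace ℝ (Fin n) → ℝ :=
    fun z x => min 1 (max 0 (2 - (2 / ρ z) * dist x z)) with hΦdef
  have hΦcont : ∀ z, Continuous (Φ z) := fun z =>
    continuous_const.min (continuous_const.max (continuous_const.sub
      (continuous_const.mul (continuous_id.dist continuous_const))))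
  have hΦ0le : ∀ z x, 0 ≤ Φ z x := fun z x => le_min zero_le_one (le_max_left _ _)
  have hΦle1 : ∀ z x, Φ z x ≤ 1 := fun z x => min_le_left _ _
  have hΦ1 : ∀ z x, 0 < ρ z → dist x z ≤ ρ z / 2 → Φ z x = 1 := by
    intro z x h0 hd
    have h1 : (2 / ρ z) * dist x z ≤ 1 := by
      have := mul_le_mul_of_nonneg_left hd (le_of_lt (div_pos two_pos h0))
      calc (2 / ρ z) * dist x z ≤ (2 / ρ z) * (ρ z / 2) := this
        _ = 1 := by field_simp
    have : (1 : ℝ) ≤ max 0 (2 - (2 / ρ z) * dist x z) :=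
      le_trans (by linarith) (le_max_right _ _)
    simp only [hΦdef]
    exact min_eq_left this
  have hΦ0 : ∀ z x, 0 < ρ z → ρ z ≤ dist x z → Φ z x = 0 := by
    intro z x h0 hd
    have h1 : (2 : ℝ) ≤ (2 / ρ z) * dist x z := by
      have := mul_le_mul_of_nonneg_left hd (le_of_lt (div_pos two_pos h0))
      calc (2 : ℝ) = (2 / ρ z) * ρ z := by field_simp
        _ ≤ (2 / ρ z) * dist x z := this
    simp only [hΦdef]
    rw [max_eq_left (by linarith)]
    exact min_eq_right zero_le_one
  -- the perturbation
  set ψ : EuclideanSpace ℝ (Fin n) → EuclideanSpace ℝ (Fin n) := fun x =>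
    if h : ∃ z, z ∈ Z ∧ dist x z < ρ z then Φ h.choose x • cz h.choose else 0 with hψdef
  have huniq : ∀ z ∈ Z, ∀ z' ∈ Z, ∀ x : EuclideanSpace ℝ (Fin n),
      dist x z < ρ z → dist x z' < ρ z' → z = z' := by
    intro z hz z' hz' x hxz hxz'
    by_contra hne2
    have h5 : 5 * ρ z ≤ dist z z' := (hρ z hz).2.2 z' (Or.inl ⟨hz', fun h => hne2 (id h).symm⟩)
    have h5' : 5 * ρ z' ≤ dist z' z := (hρ z' hz').2.2 z (Or.inl ⟨hz, fun h => hne2 (id h)⟩)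
    have htri : dist z z' ≤ dist x z + dist x z' := by
      rw [dist_comm x z]
      exact dist_triangle _ _ _
    rw [dist_comm z' z] at h5'
    have hpos : 0 < dist z z' := dist_pos.2 hne2
    linarith
  have hψ_eval : ∀ (x : EuclideanSpace ℝ (Fin n)) z, z ∈ Z → dist x z < ρ z →
      ψ x = Φ z x • cz z := by
    intro x z hz hd
    have hex : ∃ w, w ∈ Z ∧ dist x w < ρ w := ⟨z, hz, hd⟩
    simp only [hψdef]
    rw [dif_pos hex]
    obtain ⟨hw1, hw2⟩ := hex.choose_spec
    rw [huniq hex.choose hw1 z hz x hw2 hd]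
  have hψ_zero : ∀ x : EuclideanSpace ℝ (Fin n), (∀ z ∈ Z, ρ z ≤ dist x z) → ψ x = 0 := by
    intro x hx
    simp only [hψdef]
    rw [dif_neg]
    rintro ⟨z, hz, hd⟩
    exact absurd hd (not_lt.2 (hx z hz))
  have hψ_norm : ∀ x : EuclideanSpace ℝ (Fin n), ‖ψ x‖ ≤ δ := by
    intro x
    simp only [hψdef]
    split_ifs with h
    · obtain ⟨hw1, hw2⟩ := h.choose_spec
      rw [norm_smul, Real.norm_eq_abs, abs_of_nonneg (hΦ0le _ _)]
      have h1 : Φ h.choose x ≤ 1 := hΦle1 _ _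
      have h2 : ‖cz h.choose‖ ≤ δ := (hcz h.choose hw1).1
      nlinarith [norm_nonneg (cz h.choose), hΦ0le h.choose x]
    · simpa using hδ.le
  -- continuity of ψ on U
  have hψc : ∀ x₀ ∈ U, ContinuousAt ψ x₀ := by
    intro x₀ hx₀U
    by_cases hx₀Z : x₀ ∈ Z
    · refine continuousAt_of_eq_nhds (f := fun y => Φ x₀ y • cz x₀)
        (((hΦcont x₀).smul continuous_const).continuousAt)
        (Metric.ball_mem_nhds x₀ (hρ x₀ hx₀Z).1) ?_
      intro x hx
      show ψ x = Φ x₀ x • cz x₀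
      exact hψ_eval x x₀ hx₀Z (mem_ball.1 hx)
    · have hZUc : IsClosed (Z ∪ Uᶜ) := by
        rw [← isOpen_compl_iff]
        have : (Z ∪ Uᶜ)ᶜ = U \ Z := by
          ext y
          simp only [mem_compl_iff, mem_union, mem_diff, not_or, not_not]
          tauto
        rw [this, ← hUZeq]
        exact hUZopen
      rcases (Z ∪ Uᶜ).eq_empty_or_nonempty with hAe | hAne2
      · refine continuousAt_of_eq_nhds (f := fun _ => (0 : EuclideanSpace ℝ (Fin n)))
          continuousAt_const Filter.univ_mem ?_
        intro x _
        refine hψ_zero x fun z hz => ?_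
        exact absurd (show z ∈ Z ∪ Uᶜ from Or.inl hz) (by rw [hAe]; exact notMem_empty z)
      · have hx₀A : x₀ ∉ Z ∪ Uᶜ := by
          rintro (h | h)
          · exact hx₀Z h
          · exact h hx₀U
        have hd₀ : 0 < Metric.infDist x₀ (Z ∪ Uᶜ) :=
          (hZUc.notMem_iff_infDist_pos hAne2).mp hx₀A
        set d₀ := Metric.infDist x₀ (Z ∪ Uᶜ) with hd₀def
        have hVmem : Metric.ball x₀ (d₀ / 2) ∈ nhds x₀ := Metric.ball_mem_nhds _ (by linarith)
        by_cases hmm : ∃ z, z ∈ Z ∧ ∃ x ∈ Metric.ball x₀ (d₀ / 2), dist x z < ρ z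
        · obtain ⟨z₁, hz₁, x₁, hx₁V, hx₁d⟩ := hmm
          refine continuousAt_of_eq_nhds (f := fun y => Φ z₁ y • cz z₁)
            (((hΦcont z₁).smul continuous_const).continuousAt)
            hVmem ?_
          intro x hxV
          show ψ x = Φ z₁ x • cz z₁
          by_cases hx : ∃ z, z ∈ Z ∧ dist x z < ρ z
          · obtain ⟨z₂, hz₂, hd₂⟩ := hx
            have hz12 : z₂ = z₁ := by
              by_contra hne2
              have hi1 : d₀ ≤ dist x₀ z₁ := Metric.infDist_le_dist_of_mem (Or.inl hz₁)
              have hi2 : d₀ ≤ dist x₀ z₂ := Metric.infDist_le_dist_of_mem (Or.inl hz₂)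
              have hb1 : dist x₁ x₀ < d₀ / 2 := mem_ball.1 hx₁V
              have hb2 : dist x x₀ < d₀ / 2 := mem_ball.1 hxV
              have hρ1 : d₀ / 2 < ρ z₁ := by
                have ht : dist x₀ z₁ ≤ dist x₀ x₁ + dist x₁ z₁ := dist_triangle _ _ _
                rw [dist_comm x₀ x₁] at ht
                linarith
              have hρ2 : d₀ / 2 < ρ z₂ := by
                have ht : dist x₀ z₂ ≤ dist x₀ x + dist x z₂ := dist_triangle _ _ _
                rw [dist_comm x₀ x] at ht
                linarith
              have h51 : 5 * ρ z₁ ≤ dist z₁ z₂ :=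
                (hρ z₁ hz₁).2.2 z₂ (Or.inl ⟨hz₂, fun h => hne2 (id h)⟩)
              have h52 : 5 * ρ z₂ ≤ dist z₂ z₁ :=
                (hρ z₂ hz₂).2.2 z₁ (Or.inl ⟨hz₁, fun h => hne2 (id h).symm⟩)
              rw [dist_comm z₂ z₁] at h52
              have htr : dist z₁ z₂ ≤ dist z₁ x₁ + dist x₁ x + dist x z₂ :=
                dist_triangle4 _ _ _ _
              have htr2 : dist x₁ x ≤ dist x₁ x₀ + dist x x₀ := by
                rw [dist_comm x x₀]
                exact dist_triangle _ _ _
              have hdz1 : dist z₁ x₁ < ρ z₁ := by rw [dist_comm]; exact hx₁d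
              have hρ1pos : 0 < ρ z₁ := (hρ z₁ hz₁).1
              linarith
            rw [hψ_eval x z₂ hz₂ hd₂, hz12]
          · push_neg at hx
            rw [hψ_zero x (fun z hz => hx z hz),
              hΦ0 z₁ x (hρ z₁ hz₁).1 (hx z₁ hz₁), zero_smul]
        · refine continuousAt_of_eq_nhds (f := fun _ => (0 : EuclideanSpace ℝ (Fin n)))
            continuousAt_const hVmem ?_
          intro x hxV
          push_neg at hmm
          exact hψ_zero x fun z hz => hmm z hz x hxV
  -- the final map
  refine ⟨fun x => G ↑x - c - ψ ↑x, ?_, ?_, ?_⟩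
  · rw [continuous_iff_continuousAt]
    intro x
    have h1 : ContinuousAt (fun y => G y - c - ψ y) ↑x :=
      (((hGc ↑x (hEU x.2)).continuousAt).sub continuousAt_const).sub (hψc ↑x (hEU x.2))
    exact h1.comp continuous_subtype_val.continuousAt
  · intro x
    show G ↑x - c - ψ ↑x ≠ 0
    by_cases hx : ∃ z, z ∈ Z ∧ dist (↑x : EuclideanSpace ℝ (Fin n)) z < ρ z
    · obtain ⟨z, hz, hd⟩ := hx
      have hval : ψ ↑x = Φ z ↑x • cz z := hψ_eval ↑x z hz hd
      obtain ⟨hcz1, hcz2, hcz3⟩ := hcz z hz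
      by_cases hhalf : dist (↑x : EuclideanSpace ℝ (Fin n)) z ≤ ρ z / 2
      · have hΦeq : Φ z ↑x = 1 := hΦ1 z ↑x (hρ z hz).1 hhalf
        rw [hval, hΦeq, one_smul]
        intro h0
        rw [sub_eq_zero] at h0
        exact (hcz2 ↑x ⟨x.2, mem_closedBall.2 hd.le⟩) h0
      · have hxA : (↑x : EuclideanSpace ℝ (Fin n)) ∈
            closedBall z (ρ z) \ ball z (ρ z / 2) :=
          ⟨mem_closedBall.2 hd.le, fun h => hhalf (mem_ball.1 h).le⟩
        have hlt : ‖Φ z ↑x • cz z‖ < ‖G ↑x - c‖ := by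
          rw [norm_smul, Real.norm_eq_abs, abs_of_nonneg (hΦ0le _ _)]
          have h3 := hcz3 ↑x hxA
          calc Φ z ↑x * ‖cz z‖ ≤ 1 * ‖cz z‖ :=
              mul_le_mul_of_nonneg_right (hΦle1 _ _) (norm_nonneg _)
            _ = ‖cz z‖ := one_mul _
            _ < ‖G ↑x - c‖ := h3
        rw [hval]
        intro h0
        rw [sub_eq_zero] at h0
        rw [← h0] at hlt
        exact lt_irrefl _ hlt
    · push_neg at hx
      have hval : ψ ↑x = 0 := hψ_zero ↑x fun z hz => hx z hz
      rw [hval, sub_zero]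
      intro h0
      rw [sub_eq_zero] at h0
      have hxZ : (↑x : EuclideanSpace ℝ (Fin n)) ∈ Z := ⟨hEU x.2, h0⟩
      have h6 := hx ↑x hxZ
      rw [dist_self] at h6
      linarith [(hρ _ hxZ).1]
  · intro x
    show ‖f x - (G ↑x - c - ψ ↑x)‖ < ε
    have h1 : f x - (G ↑x - c - ψ ↑x) = (f x - G ↑x) + c + ψ ↑x := by abel
    rw [h1]
    have h2 : ‖f x - G ↑x‖ ≤ δ := by rw [norm_sub_rev]; exact hGf x
    have h3 := hψ_norm (↑x : EuclideanSpace ℝ (Fin n))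
    calc ‖(f x - G ↑x) + c + ψ ↑x‖ ≤ ‖(f x - G ↑x) + c‖ + ‖ψ ↑x‖ := norm_add_le _ _
      _ ≤ (‖f x - G ↑x‖ + ‖c‖) + ‖ψ ↑x‖ := by linarith [norm_add_le (f x - G ↑x) c]
      _ < ε := by simp only [hδdef] at h2 h3 hcδ; linarith
end

section
/- Let K be a compact subset of the complex plane ℂ and let f : K → ℂ be a continuous function with f(z) ≠ 0 for every z in the interior of K (interior taken in ℂ). Then for every ε > 0 there exists a continuous function g : K → ℂ with g(z) ≠ 0 for every z ∈ K and sup_{z ∈ K} |f(z) − g(z)| < ε. -/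
open Metric Set

noncomputable def bgPush (q : ℂ) (r : ℝ) (z : ℂ) : ℂ :=
  q + (max r (dist z q) / dist z q) • (z - q)

lemma bgPush_dist_center {q : ℂ} {r : ℝ} {z : ℂ} (hz : z ≠ q) :
    dist (bgPush q r z) q = max r (dist z q) := by
  have hd : (0:ℝ) < dist z q := dist_pos.2 hz
  have hm : 0 ≤ max r (dist z q) := le_trans hd.le (le_max_right _ _)
  simp only [bgPush, add_sub_cancel_left, norm_smul, Real.norm_eq_abs, abs_div,
    dist_eq_norm] at hd hm ⊢
  rw [abs_of_nonneg hm, abs_of_pos hd, div_mul_eq_mul_div]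
  exact mul_div_cancel_right₀ _ (by simpa using hd.ne')

lemma bgPush_eq_self {q : ℂ} {r : ℝ} {z : ℂ} (h : r ≤ dist z q) (hz : z ≠ q) :
    bgPush q r z = z := by
  have hd : (0:ℝ) < dist z q := dist_pos.2 hz
  rw [bgPush, max_eq_right h, div_self hd.ne', one_smul]
  ring

lemma bgPush_cases {q : ℂ} {r : ℝ} {z : ℂ} (hz : z ≠ q) :
    bgPush q r z = z ∨ (z ∈ ball q r ∧ bgPush q r z ∈ sphere q r) := by
  rcases le_or_gt r (dist z q) with h | h
  · exact Or.inl (bgPush_eq_self h hz)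
  · refine Or.inr ⟨mem_ball.2 h, ?_⟩
    have := bgPush_dist_center (r := r) hz
    rw [mem_sphere, this, max_eq_left h.le]

lemma bgPush_continuousOn (q : ℂ) (r : ℝ) :
    ContinuousOn (bgPush q r) {z | z ≠ q} := by
  intro z hz
  have hd : (0:ℝ) < dist z q := dist_pos.2 hz
  apply ContinuousWithinAt.add continuousWithinAt_const
  apply ContinuousWithinAt.fun_smul
  · apply ContinuousWithinAt.div
    · exact (continuous_const.max (continuous_id.dist continuous_const)).continuousWithinAt
    · exact (continuous_id.dist continuous_const).continuousWithinAt
    · exact hd.ne'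
  · exact (continuous_id.sub continuous_const).continuousWithinAt

lemma bgInteriorUnion {A B : Set ℂ} (hA : IsClosed A) (hAi : interior A = ∅)
    (hBi : interior B = ∅) : interior (A ∪ B) = ∅ := by
  have h1 : interior (A ∪ B) ∩ Aᶜ ⊆ B := by
    intro y hy
    rcases interior_subset hy.1 with h | h
    · exact absurd h hy.2
    · exact h
  have h2 : interior (A ∪ B) ∩ Aᶜ ⊆ interior B :=
    (isOpen_interior.inter hA.isOpen_compl).subset_interior_iff.2 h1
  rw [hBi, subset_empty_iff, ← disjoint_iff_inter_eq_empty, disjoint_compl_right_iff_subset] at h2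
  rw [← subset_empty_iff, ← hAi]
  exact isOpen_interior.subset_interior_iff.2 h2

lemma bgPushOff (S : Set ℂ) (hS : IsClosed S) (R : ℂ → ℝ) (P : Finset ℂ)
    (hR : ∀ p ∈ P, 0 < R p)
    (hnear : ∀ p ∈ P, ∃ q, q ∉ S ∧ dist p q < R p / 4) :
    ∃ H : ℂ → ℂ, ∃ V : Set ℂ, ContinuousOn H S ∧ IsClosed V ∧ interior V = ∅ ∧
      (∀ z ∈ S, H z ∈ S ∪ V) ∧ (∀ z ∈ S, H z ∉ (P : Set ℂ)) ∧
      (∀ z ∈ S, H z = z ∨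
        ((∃ p ∈ P, dist z p < R p) ∧ (∃ p ∈ P, dist (H z) p < R p))) := by
  induction P using Finset.strongInduction with
  | _ P ih =>
  rcases P.eq_empty_or_nonempty with rfl | ⟨p₁, hp₁⟩
  · exact ⟨id, ∅, continuousOn_id, isClosed_empty, interior_empty,
      fun z hz => Or.inl hz, by simp, fun z _ => Or.inl rfl⟩
  · -- inductive step
    set P' := P.erase p₁ with hP'
    have hsub : P' ⊂ P := Finset.erase_ssubset hp₁
    obtain ⟨H', V', hH'c, hV'cl, hV'int, hH'mem, hH'avoid, hH'tri⟩ :=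
      ih P' hsub (fun p hp => hR p (Finset.mem_of_mem_erase hp))
        (fun p hp => hnear p (Finset.mem_of_mem_erase hp))
    obtain ⟨q', hq'S, hq'd⟩ := hnear p₁ hp₁
    have hRp₁ : 0 < R p₁ := hR p₁ hp₁
    -- choose the center q₁ outside S and outside V'
    have hU : ∃ q₁, q₁ ∈ (ball p₁ (R p₁ / 4) ∩ Sᶜ) \ V' := by
      by_contra h
      push_neg at h
      have hsub2 : ball p₁ (R p₁ / 4) ∩ Sᶜ ⊆ V' := by
        intro x hx
        by_contra hxV
        exact h x ⟨hx, hxV⟩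
      have hopen : IsOpen (ball p₁ (R p₁ / 4) ∩ Sᶜ) := isOpen_ball.inter hS.isOpen_compl
      have : (ball p₁ (R p₁ / 4) ∩ Sᶜ) ⊆ interior V' :=
        hopen.subset_interior_iff.2 hsub2
      rw [hV'int] at this
      exact this ⟨by simpa [mem_ball, dist_comm] using hq'd, hq'S⟩ 
    obtain ⟨q₁, ⟨hq₁ball, hq₁S⟩, hq₁V⟩ := hU
    rw [mem_compl_iff] at hq₁S
    have hd₁ : dist p₁ q₁ < R p₁ / 4 := by rwa [mem_ball, dist_comm] at hq₁ball
    -- choose a generic radius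
    obtain ⟨r₁, hr₁Ioo, hr₁gen⟩ :=
      (Set.Ioo_infinite (show dist p₁ q₁ < R p₁ / 2 by linarith)).exists_notMem_finset
        (P.image (fun p => dist p q₁))
    have hr₁gen' : ∀ p ∈ P, dist p q₁ ≠ r₁ := by
      intro p hp h
      exact hr₁gen (Finset.mem_image.2 ⟨p, hp, h⟩)
    obtain ⟨hr₁lo, hr₁hi⟩ := hr₁Ioo
    have hr₁pos : 0 < r₁ := lt_of_le_of_lt dist_nonneg hr₁lo
    -- the new map
    have hne : ∀ z ∈ S, H' z ≠ q₁ := by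
      intro z hz h
      rcases hH'mem z hz with h' | h'
      · exact hq₁S (h ▸ h')
      · exact hq₁V (h ▸ h')
    refine ⟨fun z => bgPush q₁ r₁ (H' z), V' ∪ sphere q₁ r₁, ?_, ?_, ?_, ?_, ?_, ?_⟩
    · exact (bgPush_continuousOn q₁ r₁).comp hH'c (fun z hz => hne z hz)
    · exact hV'cl.union isClosed_sphere
    · exact bgInteriorUnion hV'cl hV'int (interior_sphere' q₁ r₁)
    · -- membership in S ∪ V
      intro z hz
      beta_reduce
      rcases bgPush_cases (r := r₁) (hne z hz) with h | h
      · rw [h]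
        rcases hH'mem z hz with h' | h'
        · exact Or.inl h'
        · exact Or.inr (Or.inl h')
      · exact Or.inr (Or.inr h.2)
    · -- avoids P
      intro z hz hmem
      beta_reduce at hmem
      simp only [Finset.coe_insert, Set.mem_insert_iff, Finset.mem_coe] at hmem
      set w := H' z with hw
      have hwq : w ≠ q₁ := hne z hz
      set p : ℂ := bgPush q₁ r₁ w with hp
      have hpP : p ∈ P := hmem
      have hdist : dist p q₁ = max r₁ (dist w q₁) := bgPush_dist_center hwq
      have h1 : r₁ ≤ dist p q₁ := hdist ▸ le_max_left _ _
      have h2 : r₁ < dist p q₁ := lt_of_le_of_ne h1 (fun h => hr₁gen' p hpP h.symm)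
      have h3 : dist w q₁ = dist p q₁ := by
        rcases max_cases r₁ (dist w q₁) with ⟨h4, h5⟩ | ⟨h4, h5⟩
        · rw [hdist, h4] at h2; exact absurd h2 (lt_irrefl _)
        · rw [hdist, h4]
      have h4 : bgPush q₁ r₁ w = w := bgPush_eq_self (by rw [h3]; exact h1) hwq
      have hwP : w ∈ (P' : Set ℂ) := by
        have hpne : p ≠ p₁ := by
          intro h
          rw [h] at h2
          linarith
        have hpw : p = w := hp.trans h4
        rw [hpw] at hpP hpne
        rw [hP']
        simp only [Finset.coe_erase, Set.mem_diff, Set.mem_singleton_iff, Finset.mem_coe]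
        exact ⟨hpP, hpne⟩
      exact hH'avoid z hz hwP
    · -- trichotomy
      intro z hz
      beta_reduce
      have hwq : H' z ≠ q₁ := hne z hz
      obtain ⟨w, hw⟩ : ∃ w, H' z = w := ⟨H' z, rfl⟩
      rw [hw] at hwq
      rw [hw]
      rcases bgPush_cases (r := r₁) hwq with h | ⟨hball, hsph⟩
      · rw [h]
        rcases hH'tri z hz with h' | ⟨⟨p, hpP, hpd⟩, ⟨p2, hp2P, hp2d⟩⟩
        · exact Or.inl (by rw [← hw]; exact h')
        · exact Or.inr ⟨⟨p, Finset.mem_of_mem_erase hpP, hpd⟩,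
            ⟨p2, Finset.mem_of_mem_erase hp2P, by rwa [← hw]⟩⟩
      · right
        constructor
        · -- z is near some point of P
          rcases eq_or_ne w z with h'' | h''
          · refine ⟨p₁, hp₁, ?_⟩
            have : dist z q₁ < r₁ := by rw [← h'']; exact mem_ball.1 hball
            calc dist z p₁ ≤ dist z q₁ + dist q₁ p₁ := dist_triangle _ _ _
              _ < r₁ + R p₁ / 4 := by rw [dist_comm q₁ p₁]; exact add_lt_add this hd₁
              _ < R p₁ := by linarith
          · rcases hH'tri z hz with h3 | ⟨⟨p, hpP, hpd⟩, _⟩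
            · exact absurd (by rw [← hw]; exact h3) h''
            · exact ⟨p, Finset.mem_of_mem_erase hpP, hpd⟩
        · -- the image is near p₁
          refine ⟨p₁, hp₁, ?_⟩
          have h5 : dist (bgPush q₁ r₁ w) q₁ = r₁ := mem_sphere.1 hsph
          calc dist (bgPush q₁ r₁ w) p₁ ≤ dist (bgPush q₁ r₁ w) q₁ + dist q₁ p₁ :=
                dist_triangle _ _ _
            _ < r₁ + R p₁ / 4 := by
                rw [h5, dist_comm q₁ p₁]; exact add_lt_add_right hd₁ r₁
            _ < R p₁ := by linarith

open Metric Set MeasureTheory ContinuousLinearMap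
open scoped Convolution Topology

-- compact + isolated points ⇒ finite
lemma bgCompactIsolatedFinite {T : Set ℂ} (hT : IsCompact T)
    (h : ∀ x ∈ T, ∃ U : Set ℂ, IsOpen U ∧ x ∈ U ∧ U ∩ T ⊆ {x}) : T.Finite := by
  have h' : ∀ x : ℂ, ∃ U : Set ℂ, IsOpen U ∧ (x ∈ T → x ∈ U ∧ U ∩ T ⊆ {x}) := by
    intro x
    by_cases hx : x ∈ T
    · obtain ⟨U, a, b, c⟩ := h x hx
      exact ⟨U, a, fun _ => ⟨b, c⟩⟩
    · exact ⟨univ, isOpen_univ, fun hx' => absurd hx' hx⟩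
  choose U hUo hU using h'
  obtain ⟨s, hsT, hsfin, hcov⟩ := hT.elim_finite_subcover_image
    (fun x (_ : x ∈ T) => hUo x) (fun x hx => mem_biUnion hx (hU x hx).1)
  refine hsfin.subset ?_
  intro y hy
  obtain ⟨x, hxs, hyU⟩ := by simpa using hcov hy
  have h2 := mem_singleton_iff.1 ((hU x (hsT hxs)).2 ⟨hyU, hy⟩)
  rw [h2]
  exact hxs

-- finiteness of zeros at a regular value
lemma bgFiniteZeros {G : ℂ → ℂ} (hG : ContDiff ℝ 2 G) {c : ℂ}
    (hc : ∀ z : ℂ, G z = c → (fderiv ℝ G z).det ≠ 0) {L : Set ℂ} (hL : IsCompact L) :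
    {z ∈ L | G z = c}.Finite := by
  have hTcl : IsClosed {z : ℂ | G z = c} :=
    isClosed_singleton.preimage (hG.continuous (n := 2))
  have hTcpt : IsCompact {z ∈ L | G z = c} := by
    have : {z ∈ L | G z = c} = L ∩ {z : ℂ | G z = c} := rfl
    rw [this]
    exact hL.inter_right hTcl
  apply bgCompactIsolatedFinite hTcpt
  rintro x ⟨hxL, hxc⟩
  -- the derivative is invertible at x
  have hdet : (fderiv ℝ G x).det ≠ 0 := hc x hxc
  set φ := fderiv ℝ G x with hφ
  let e : ℂ ≃ₗ[ℝ] ℂ := LinearMap.equivOfDetNeZero φ.toLinearMap hdet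
  let e' : ℂ ≃L[ℝ] ℂ := e.toContinuousLinearEquiv
  have he' : (e' : ℂ →L[ℝ] ℂ) = φ := by
    ext w
    show e w = φ w
    simp [e, LinearMap.equivOfDetNeZero]
  have hstrict : HasStrictFDerivAt G (e' : ℂ →L[ℝ] ℂ) x := by
    rw [he']
    exact (hG.contDiffAt).hasStrictFDerivAt (by norm_num)
  set Ψ := hstrict.toOpenPartialHomeomorph G with hΨ
  refine ⟨Ψ.source, Ψ.open_source, hstrict.mem_toOpenPartialHomeomorph_source, ?_⟩
  rintro y ⟨hyU, hyL, hyc⟩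
  have hinj := Ψ.injOn
  have hGy : G y = G x := by rw [hyc, hxc]
  have : y = x := by
    apply hinj hyU hstrict.mem_toOpenPartialHomeomorph_source
    show Ψ y = Ψ x
    have hcoe : (Ψ : ℂ → ℂ) = G := hstrict.toOpenPartialHomeomorph_coe
    rw [hcoe]
    exact hGy
  exact this

open Metric Set MeasureTheory ContinuousLinearMap
open scoped Convolution Topology ENNReal

lemma bgSmoothApprox (F : ℂ → ℂ) (hF : Continuous F) (A : Set ℂ) (hA : IsCompact A)
    {θ : ℝ} (hθ : 0 < θ) :
    ∃ G : ℂ → ℂ, ContDiff ℝ 2 G ∧ ∀ x ∈ A, dist (G x) (F x) ≤ θ := by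
  -- uniform continuity on a compact thickening
  have hA1 : IsCompact (cthickening 1 A) := hA.cthickening
  have hFu : UniformContinuousOn F (cthickening 1 A) :=
    hA1.uniformContinuousOn_of_continuous hF.continuousOn
  rw [Metric.uniformContinuousOn_iff] at hFu
  obtain ⟨ρ, hρ0, hρ⟩ := hFu θ hθ
  set r : ℝ := min (ρ / 2) (1 / 2) with hr
  have hr0 : 0 < r := by positivity
  have hr1 : r ≤ 1 / 2 := min_le_right _ _
  have hrρ : r < ρ := lt_of_le_of_lt (min_le_left _ _) (by linarith)
  set φ : ContDiffBump (0 : ℂ) := ⟨r / 2, r, by positivity, by linarith⟩ with hφ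
  refine ⟨(φ.normed volume) ⋆[lsmul ℝ ℝ, volume] F, ?_, ?_⟩
  · exact φ.hasCompactSupport_normed.contDiff_convolution_left _
      (φ.contDiff_normed (n := 2)) (hF.locallyIntegrable)
  · intro x hx
    apply φ.dist_normed_convolution_le hF.aestronglyMeasurable
    intro y hy
    have hxA : x ∈ cthickening 1 A := self_subset_cthickening A hx
    have hyA : y ∈ cthickening 1 A := by
      apply mem_cthickening_of_dist_le y x 1 A hx
      have : dist y x < r := mem_ball.1 hy
      linarith
    exact (hρ y hyA x hxA (by have : dist y x < r := mem_ball.1 hy; linarith)).le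

lemma bgRegularValue (G : ℂ → ℂ) (hG : ContDiff ℝ 2 G) {θ : ℝ} (hθ : 0 < θ) :
    ∃ c : ℂ, ‖c‖ < θ ∧ ∀ z : ℂ, G z = c → (fderiv ℝ G z).det ≠ 0 := by
  set C := {z : ℂ | (fderiv ℝ G z).det = 0} with hC
  have himg : volume (G '' C) = 0 :=
    addHaar_image_eq_zero_of_det_fderivWithin_eq_zero volume
      (fun x _ => ((hG.differentiable (by norm_num)) x).hasFDerivAt.hasFDerivWithinAt)
      (fun x hx => hx)
  have hball : (0:ℝ≥0∞) < volume (ball (0:ℂ) θ) := measure_ball_pos _ _ hθ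
  have hns : ¬ ball (0:ℂ) θ ⊆ G '' C := fun hsub =>
    absurd (le_antisymm (le_trans (measure_mono hsub) himg.le) zero_le) hball.ne'
  obtain ⟨c, hc1, hc2⟩ := not_subset.1 hns
  exact ⟨c, by simpa [mem_ball, dist_eq_norm] using hc1,
    fun z hz hdet => hc2 ⟨z, hdet, hz⟩⟩

/-- **Bishop–Gauthier**: a continuous function on a compact set `K ⊆ ℂ` that is
zero-free on the interior of `K` is a uniform limit of continuous functions
zero-free on all of `K`. -/
theorem zeroFree_approximation_complex_compact (K : Set ℂ) (hK : IsCompact K)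
    (f : K → ℂ) (hf : Continuous f)
    (hf0 : ∀ z : K, (z : ℂ) ∈ interior K → f z ≠ 0)
    (ε : ℝ) (hε : 0 < ε) :
    ∃ g : K → ℂ, Continuous g ∧ (∀ z : K, g z ≠ 0) ∧
      ∀ z : K, ‖f z - g z‖ < ε := by
  classical
  rcases K.eq_empty_or_nonempty with hKe | hKne
  · have hemp : IsEmpty ↥K := Set.isEmpty_coe_sort.2 hKe
    exact ⟨fun _ => 1, continuous_const, fun z => (hemp.false z).elim,
      fun z => (hemp.false z).elim⟩
  have hKcl : IsClosed K := hK.isClosed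
  have hKcne : Kᶜ.Nonempty := nonempty_compl.2 hK.ne_univ
  -- Tietze extension of `f`
  obtain ⟨Fc, hFc⟩ := ContinuousMap.exists_restrict_eq (Y := ℂ) hKcl ⟨f, hf⟩
  set F : ℂ → ℂ := ⇑Fc with hFdef
  have hFcont : Continuous F := Fc.continuous
  have hFK : ∀ z : K, F ↑z = f z := by
    intro z
    have h1 := DFunLike.congr_fun hFc z
    rwa [ContinuousMap.restrict_apply] at h1
  set β : ℝ := ε / 8 with hβdef
  have hβ : 0 < β := by positivity
  -- uniform continuity scale on a big compact thickening
  set A4 : Set ℂ := Metric.cthickening 4 K with hA4def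
  have hA4 : IsCompact A4 := hK.cthickening
  have hKA4 : K ⊆ A4 := self_subset_cthickening K
  have hFu : UniformContinuousOn F A4 :=
    hA4.uniformContinuousOn_of_continuous hFcont.continuousOn
  rw [Metric.uniformContinuousOn_iff] at hFu
  obtain ⟨ρ, hρ0, hρ⟩ := hFu β hβ
  set r : ℝ := min (ρ / 2) (1 / 2) with hrdef
  have hr0 : 0 < r := by positivity
  have hr1 : r ≤ 1 / 2 := min_le_right _ _
  have hrρ : r < ρ := lt_of_le_of_lt (min_le_left _ _) (by linarith)
  -- points of `K` where `F` is small are close to the complement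
  have hmex : ∃ m : ℝ, 0 < m ∧ ∀ z ∈ K, ‖F z‖ < m → infDist z Kᶜ < r / 4 := by
    set KD := {z ∈ K | r / 4 ≤ infDist z Kᶜ} with hKDdef
    have hKDcl : IsClosed KD := by
      have h1 : KD = K ∩ {z | r / 4 ≤ infDist z Kᶜ} := rfl
      rw [h1]
      exact hKcl.inter (isClosed_le continuous_const (continuous_infDist_pt _))
    have hKDcpt : IsCompact KD := hK.of_isClosed_subset hKDcl (fun z hz => hz.1)
    rcases KD.eq_empty_or_nonempty with hKDe | hKDne
    · refine ⟨1, one_pos, fun z hz _ => ?_⟩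
      by_contra h
      push_neg at h
      exact absurd (show z ∈ KD from ⟨hz, h⟩) (by rw [hKDe]; exact notMem_empty z)
    · obtain ⟨z₀, hz₀, hmin⟩ := hKDcpt.exists_isMinOn hKDne hFcont.norm.continuousOn
      refine ⟨‖F z₀‖, ?_, ?_⟩
      · have hz₀K : z₀ ∈ K := hz₀.1
        have hz₀int : z₀ ∈ interior K := by
          rw [mem_interior]
          refine ⟨Metric.ball z₀ (r / 4), ?_, Metric.isOpen_ball,
            Metric.mem_ball_self (by positivity)⟩
          intro y hy
          by_contra hyK
          have h2 : infDist z₀ Kᶜ ≤ dist z₀ y := infDist_le_dist_of_mem hyK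
          have h3 : dist z₀ y < r / 4 := by rw [dist_comm]; exact Metric.mem_ball.1 hy
          have h4 : r / 4 ≤ infDist z₀ Kᶜ := hz₀.2
          linarith
        have h5 : F z₀ = f ⟨z₀, hz₀K⟩ := hFK ⟨z₀, hz₀K⟩
        rw [h5]
        exact norm_pos_iff.2 (hf0 ⟨z₀, hz₀K⟩ hz₀int)
      · intro z hz hlt
        by_contra h
        push_neg at h
        have h6 : z ∈ KD := ⟨hz, h⟩
        have h7 : ‖F z₀‖ ≤ ‖F z‖ := hmin h6
        linarith
  obtain ⟨m, hm0, hmK⟩ := hmex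
  set θ : ℝ := min β (m / 3) with hθdef
  have hθ : 0 < θ := lt_min hβ (by positivity)
  have hθβ : θ ≤ β := min_le_left _ _
  have hθm : θ ≤ m / 3 := min_le_right _ _
  -- smooth approximation and a regular value
  obtain ⟨G, hGsm, hGF⟩ := bgSmoothApprox F hFcont A4 hA4 hθ
  obtain ⟨c, hc, hreg⟩ := bgRegularValue G hGsm hθ
  have hGcont : Continuous G := hGsm.continuous
  -- the finitely many zeros near K
  have hZfin : {z ∈ A4 | G z = c}.Finite := bgFiniteZeros hGsm hreg hA4
  set Z4 : Finset ℂ := hZfin.toFinset with hZ4def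
  have hZ4 : ∀ w : ℂ, w ∈ Z4 ↔ (w ∈ A4 ∧ G w = c) := fun w => hZfin.mem_toFinset
  set dfun : ℂ → ℝ := fun w => infDist w K with hdfundef
  -- a generic cut distance t
  obtain ⟨t, htIoo, htgen⟩ :=
    (Set.Ioo_infinite (show (1:ℝ) < 2 by norm_num)).exists_notMem_finset (Z4.image dfun)
  obtain ⟨ht1, ht2⟩ := htIoo
  -- a gap below the zeros beyond the cut
  have hςex : ∃ ς : ℝ, 0 < ς ∧ ς ≤ r ∧ ∀ w ∈ Z4, dfun w ≤ t + ς → dfun w ≤ t := by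
    set B := Z4.filter (fun w => t < dfun w) with hBdef
    rcases B.eq_empty_or_nonempty with hBe | hBne
    · refine ⟨r, hr0, le_rfl, fun w hw hle => ?_⟩
      by_contra h
      push_neg at h
      have h1 : w ∈ B := Finset.mem_filter.2 ⟨hw, h⟩
      rw [hBe] at h1
      exact absurd h1 (Finset.notMem_empty w)
    · set μm := (B.image (fun w => dfun w - t)).min' (hBne.image _) with hμdef
      have hμpos : 0 < μm := by
        have h1 := (B.image (fun w => dfun w - t)).min'_mem (hBne.image _)
        obtain ⟨w, hwB, hweq⟩ := Finset.mem_image.1 h1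
        have h2 : t < dfun w := (Finset.mem_filter.1 hwB).2
        rw [hμdef, ← hweq]
        linarith
      refine ⟨min r (μm / 2), lt_min hr0 (by positivity), min_le_left _ _, ?_⟩
      intro w hw hle
      by_contra h
      push_neg at h
      have hwB : w ∈ B := Finset.mem_filter.2 ⟨hw, h⟩
      have h3 : μm ≤ dfun w - t :=
        Finset.min'_le _ _ (Finset.mem_image.2 ⟨w, hwB, rfl⟩)
      have h4 : min r (μm / 2) ≤ μm / 2 := min_le_right _ _
      linarith
  obtain ⟨ς, hς0, hςr, hςgap⟩ := hςex
  -- the bad set and the radii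
  set P : Finset ℂ := Z4.filter (fun w => dfun w ≤ t) with hPdef
  set Rfun : ℂ → ℝ := fun p => if p ∈ K then r else ς with hRfundef
  have hRle : ∀ p, Rfun p ≤ r := by
    intro p
    by_cases h : p ∈ K
    · rw [hRfundef]; simp [h]
    · rw [hRfundef]; simp [h, hςr]
  have hRpos : ∀ p ∈ P, 0 < Rfun p := by
    intro p _
    by_cases h : p ∈ K
    · rw [hRfundef]; simp [h, hr0]
    · rw [hRfundef]; simp [h, hς0]
  have hnear : ∀ p ∈ P, ∃ q, q ∉ K ∧ dist p q < Rfun p / 4 := by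
    intro p hp
    obtain ⟨hpZ4, hpd⟩ := Finset.mem_filter.1 hp
    obtain ⟨hpA4, hpc⟩ := (hZ4 p).1 hpZ4
    by_cases hpK : p ∈ K
    · have h1 : ‖F p‖ < m := by
        have h2 : dist (G p) (F p) ≤ θ := hGF p hpA4
        rw [dist_eq_norm, norm_sub_rev, hpc] at h2
        have h7 : θ ≤ m / 3 := hθm
        calc ‖F p‖ = ‖F p - c + c‖ := by rw [sub_add_cancel]
          _ ≤ ‖F p - c‖ + ‖c‖ := norm_add_le _ _
          _ ≤ θ + θ := add_le_add h2 hc.le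
          _ < m := by linarith
      have h4 : infDist p Kᶜ < r / 4 := hmK p hpK h1
      obtain ⟨q, hqKc, hqd⟩ := (infDist_lt_iff hKcne).1 h4
      refine ⟨q, hqKc, ?_⟩
      rw [hRfundef]
      simp only [hpK, if_true]
      exact hqd
    · refine ⟨p, hpK, ?_⟩
      rw [hRfundef]
      simp only [hpK, if_false, dist_self]
      positivity
  -- push the zeros off K
  obtain ⟨H, V, hHc, _, _, _, hHavoid, hHtri⟩ := bgPushOff K hKcl Rfun P hRpos hnear
  -- membership helper
  have hmemA4 : ∀ w : ℂ, infDist w K < 4 → w ∈ A4 := by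
    intro w hw
    obtain ⟨y, hyK, hyd⟩ := (infDist_lt_iff hKne).1 hw
    exact Metric.mem_cthickening_of_dist_le w y 4 K hyK hyd.le
  -- zeros reachable by H are in P
  have hPzero : ∀ w : ℂ, dfun w ≤ t + ς → G w = c → w ∈ (P : Set ℂ) := by
    intro w hw hwc
    have h1 : w ∈ A4 := hmemA4 w (by
      have : dfun w = infDist w K := rfl
      rw [this] at hw
      linarith)
    have h2 : w ∈ Z4 := (hZ4 w).2 ⟨h1, hwc⟩
    have h3 : dfun w ≤ t := hςgap w h2 hw
    exact_mod_cast Finset.mem_filter.2 ⟨h2, h3⟩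
  -- images stay where zeros are accounted for
  have hHin : ∀ z : ℂ, z ∈ K → ∀ p' ∈ P, dist (H z) p' < Rfun p' →
      dfun (H z) ≤ t + ς := by
    intro z hz p' hp'P hp'd
    obtain ⟨hp'Z4, hp'dt⟩ := Finset.mem_filter.1 hp'P
    by_cases hp'K : p' ∈ K
    · have h1 : dfun p' = 0 := infDist_zero_of_mem hp'K
      have h2 : dfun (H z) ≤ dfun p' + dist (H z) p' := infDist_le_infDist_add_dist
      have h3 : Rfun p' ≤ r := hRle p'
      have : dfun (H z) < r := by rw [h1] at h2; linarith
      linarith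
    · have h2 : dfun (H z) ≤ dfun p' + dist (H z) p' := infDist_le_infDist_add_dist
      have h3 : Rfun p' = ς := by rw [hRfundef]; simp [hp'K]
      rw [h3] at hp'd
      linarith
  -- define the approximating zero-free function
  refine ⟨fun z => G (H ↑z) - c, ?_, ?_, ?_⟩
  · have h1 : ContinuousOn (fun w => G (H w) - c) K :=
      (hGcont.comp_continuousOn hHc).sub continuousOn_const
    exact h1.restrict
  · -- zero-freeness
    intro z h0
    beta_reduce at h0
    rw [sub_eq_zero] at h0
    rcases hHtri ↑z z.2 with heq | ⟨_, ⟨p', hp'P, hp'd⟩⟩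
    · have h1 : (↑z : ℂ) ∈ (P : Set ℂ) := by
        apply hPzero ↑z ?_ (by rw [← heq]; exact h0)
        have h2 : dfun ↑z = 0 := infDist_zero_of_mem z.2
        rw [h2]
        positivity
      have h3 := hHavoid ↑z z.2
      rw [heq] at h3
      exact h3 h1
    · exact hHavoid ↑z z.2 (hPzero (H ↑z) (hHin ↑z z.2 p' hp'P hp'd) h0)
  · -- the approximation estimate
    intro z
    beta_reduce
    rw [← hFK z]
    rcases hHtri ↑z z.2 with heq | ⟨⟨p, hpP, hpd⟩, ⟨p', hp'P, hp'd⟩⟩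
    · rw [heq]
      have h1 : dist (G ↑z) (F ↑z) ≤ θ := hGF ↑z (hKA4 z.2)
      calc ‖F ↑z - (G ↑z - c)‖ ≤ ‖F ↑z - G ↑z‖ + ‖c‖ := by
            have : F ↑z - (G ↑z - c) = (F ↑z - G ↑z) + c := by ring
            rw [this]
            exact norm_add_le _ _
        _ ≤ θ + θ := by
            rw [dist_eq_norm, norm_sub_rev] at h1
            exact add_le_add h1 hc.le
        _ < ε := by rw [hβdef] at hθβ; linarith
    · obtain ⟨hpZ4, hpdt⟩ := Finset.mem_filter.1 hpP
      obtain ⟨hpA4, hpc⟩ := (hZ4 p).1 hpZ4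
      obtain ⟨hp'Z4, hp'dt⟩ := Finset.mem_filter.1 hp'P
      obtain ⟨hp'A4, hp'c⟩ := (hZ4 p').1 hp'Z4
      have hzA4 : (↑z : ℂ) ∈ A4 := hKA4 z.2
      have hHzA4 : H ↑z ∈ A4 := by
        apply hmemA4
        have h1 := hHin ↑z z.2 p' hp'P hp'd
        have h2 : dfun (H ↑z) = infDist (H ↑z) K := rfl
        rw [h2] at h1
        linarith
      -- z is close to the zero p
      have hzp : dist (F ↑z) (F p) < β := by
        apply hρ ↑z hzA4 p hpA4
        have h1 : dist ↑z p < Rfun p := hpd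
        have h2 := hRle p
        linarith
      have hHzp' : dist (F (H ↑z)) (F p') < β := by
        apply hρ (H ↑z) hHzA4 p' hp'A4
        have h1 : dist (H ↑z) p' < Rfun p' := hp'd
        have h2 := hRle p'
        linarith
      have hFz : ‖F ↑z‖ ≤ β + 2 * θ := by
        have h1 : ‖F ↑z - c‖ = dist (F ↑z) c := (dist_eq_norm _ _).symm
        have h2 : dist (F ↑z) c ≤ dist (F ↑z) (F p) + dist (F p) (G p) := by
          rw [hpc] at *
          exact dist_triangle _ _ _
        have h3 : dist (F p) (G p) ≤ θ := by rw [dist_comm]; exact hGF p hpA4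
        calc ‖F ↑z‖ = ‖F ↑z - c + c‖ := by rw [sub_add_cancel]
          _ ≤ ‖F ↑z - c‖ + ‖c‖ := norm_add_le _ _
          _ ≤ (dist (F ↑z) (F p) + dist (F p) (G p)) + ‖c‖ := by rw [h1]; gcongr
          _ ≤ (β + θ) + θ := by
              refine add_le_add (add_le_add hzp.le h3) hc.le
          _ = β + 2 * θ := by ring
      have hGHz : ‖G (H ↑z) - c‖ ≤ β + 2 * θ := by
        have h1 : ‖G (H ↑z) - c‖ = dist (G (H ↑z)) (G p') := by
          rw [dist_eq_norm, hp'c]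
        have h2 : dist (G (H ↑z)) (G p') ≤
            dist (G (H ↑z)) (F (H ↑z)) + dist (F (H ↑z)) (F p') + dist (F p') (G p') :=
          dist_triangle4 _ _ _ _
        have h3 : dist (G (H ↑z)) (F (H ↑z)) ≤ θ := hGF _ hHzA4
        have h4 : dist (F p') (G p') ≤ θ := by rw [dist_comm]; exact hGF p' hp'A4
        rw [h1]
        calc dist (G (H ↑z)) (G p') ≤ _ := h2
          _ ≤ θ + β + θ := by gcongr
          _ = β + 2 * θ := by ring
      calc ‖F ↑z - (G (H ↑z) - c)‖ ≤ ‖F ↑z‖ + ‖G (H ↑z) - c‖ := norm_sub_le _ _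
        _ ≤ (β + 2 * θ) + (β + 2 * θ) := add_le_add hFz hGHz
        _ < ε := by rw [hβdef] at hθβ ⊢; linarith
end

section
/- Let X be a metrizable topological space and let g : X → ℝⁿ be continuous. Suppose X = A ∪ B where A and B are closed subsets of X, g(x) ≠ 0 for all x ∈ A, and B has the property that every continuous map from B to ℝⁿ is a uniform limit of continuous zero-free maps from B to ℝⁿ. Then for every ε > 0 there exists a continuous map h : X → ℝⁿ with h(x) ≠ 0 for all x ∈ X and sup_{x ∈ X} |h(x) − g(x)| < ε. -/
set_option maxHeartbeats 1000000


/-- **Lemma 2 of the paper.** If a metrizable space `X` is the union of two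
closed subsets `A` and `B`, `g : X → ℝⁿ` is continuous and zero-free on `A`,
and every continuous map `B → ℝⁿ` is a uniform limit of continuous zero-free
maps, then `g` is a uniform limit of continuous maps zero-free on all of `X`. -/
theorem zeroFree_approximation_union {X : Type*} [TopologicalSpace X]
    [TopologicalSpace.MetrizableSpace X] (n : ℕ)
    (g : X → EuclideanSpace ℝ (Fin n)) (hg : Continuous g)
    (A B : Set X) (hA : IsClosed A) (hB : IsClosed B) (hAB : A ∪ B = Set.univ)
    (hgA : ∀ x ∈ A, g x ≠ 0)
    (hBapprox : ∀ f : B → EuclideanSpace ℝ (Fin n), Continuous f → ∀ δ : ℝ, 0 < δ →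
      ∃ b : B → EuclideanSpace ℝ (Fin n), Continuous b ∧ (∀ x : B, b x ≠ 0) ∧
        ∀ x : B, ‖f x - b x‖ < δ)
    (ε : ℝ) (hε : 0 < ε) :
    ∃ h : X → EuclideanSpace ℝ (Fin n), Continuous h ∧ (∀ x : X, h x ≠ 0) ∧
      ∀ x : X, ‖h x - g x‖ < ε := by
  letI : MetricSpace X := TopologicalSpace.metrizableSpaceMetric X
  rcases A.eq_empty_or_nonempty with hAe | hAn
  · -- `A = ∅`, so `B = univ` and we can use `hBapprox` directly.
    have hBu : ∀ x : X, x ∈ B := by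
      intro x
      have : x ∈ A ∪ B := hAB ▸ Set.mem_univ x
      simpa [hAe] using this
    obtain ⟨b, hbc, hb0, hbd⟩ := hBapprox (fun x => g x)
      (hg.comp continuous_subtype_val) (ε / 2) (by positivity)
    refine ⟨fun x => b ⟨x, hBu x⟩, hbc.comp (Continuous.subtype_mk continuous_id _), ?_, ?_⟩
    · intro x; exact hb0 _
    · intro x
      have := hbd ⟨x, hBu x⟩
      have : ‖(fun x : B => g x) ⟨x, hBu x⟩ - b ⟨x, hBu x⟩‖ < ε / 2 := hbd _
      rw [← norm_neg]
      simpa [neg_sub] using this.trans_le (by linarith)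
  · -- Main case.
    set D : X → ℝ := fun x => Metric.infDist x A with hD
    have hDc : Continuous D := Metric.continuous_infDist_pt A
    have hD0 : ∀ x ∈ A, D x = 0 := fun x hx => Metric.infDist_zero_of_mem hx
    have hDpos : ∀ x ∉ A, 0 < D x := fun x hx =>
      (hA.notMem_iff_infDist_pos hAn).mp hx
    have hDnn : ∀ x, 0 ≤ D x := fun x => Metric.infDist_nonneg
    set r : X → ℝ := fun x => min (ε / 2) (max ‖g x‖ (D x)) with hr
    have hrc : Continuous r := (continuous_const.min ((hg.norm).max hDc))
    have hrpos : ∀ x, 0 < r x := by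
      intro x
      by_cases hx : x ∈ A
      · have : 0 < ‖g x‖ := norm_pos_iff.mpr (hgA x hx)
        exact lt_min (by positivity) (lt_of_lt_of_le this (le_max_left _ _))
      · exact lt_min (by positivity) (lt_of_lt_of_le (hDpos x hx) (le_max_right _ _))
    have hrle : ∀ x, r x ≤ ε / 2 := fun x => min_le_left _ _
    -- approximate `x ↦ (r x)⁻¹ • g x` on `B` with tolerance 1
    have hinv : Continuous fun x : B => (r x)⁻¹ := by
      apply Continuous.inv₀
      · exact hrc.comp continuous_subtype_val
      · exact fun x => (hrpos _).ne'
    have hf : Continuous fun x : B => (r x)⁻¹ • g x :=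
      hinv.smul (hg.comp continuous_subtype_val)
    obtain ⟨c, hcc, hc0, hcd⟩ := hBapprox (fun x : B => (r x)⁻¹ • g x) hf 1 one_pos
    -- key estimate on `B` : ‖r x • c x - g x‖ < r x
    have key : ∀ x : B, ‖r (x : X) • c x - g (x : X)‖ < r (x : X) := by
      intro x
      have h1 := hcd x
      have hrx := hrpos (x : X)
      have : ‖r (x : X) • ((r (x : X))⁻¹ • g (x : X) - c x)‖ < r (x : X) := by
        rw [norm_smul, Real.norm_of_nonneg hrx.le]
        calc r (x : X) * ‖(r (x : X))⁻¹ • g (x : X) - c x‖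
            < r (x : X) * 1 := by exact mul_lt_mul_of_pos_left h1 hrx
          _ = r (x : X) := mul_one _
      rw [← norm_neg]
      refine lt_of_eq_of_lt (congrArg norm ?_) this
      rw [smul_sub, smul_inv_smul₀ hrx.ne']
      abel
    -- Tietze extension of `c` to all of `X`
    obtain ⟨ctilde, hct⟩ := ContinuousMap.exists_restrict_eq (Y := EuclideanSpace ℝ (Fin n))
      hB ⟨c, hcc⟩
    have hctB : ∀ x : B, ctilde (x : X) = c x := by
      intro x
      have := DFunLike.congr_fun hct x
      simpa using this
    -- the interpolation parameter
    set ψ : X → ℝ := fun x => min 1 (D x / r x) with hψ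
    have hψc : Continuous ψ := continuous_const.min (hDc.div hrc fun x => (hrpos x).ne')
    have hψ0 : ∀ x ∈ A, ψ x = 0 := by
      intro x hx
      simp [hψ, hD0 x hx, zero_le_one]
    have hψnn : ∀ x, 0 ≤ ψ x := fun x =>
      le_min zero_le_one (div_nonneg (hDnn x) (hrpos x).le)
    have hψle : ∀ x, ψ x ≤ 1 := fun x => min_le_left _ _
    -- the map
    set h : X → EuclideanSpace ℝ (Fin n) :=
      fun x => g x + ψ x • (r x • ctilde x - g x) with hh
    have hhc : Continuous h := by
      apply hg.add
      exact hψc.smul ((hrc.smul ctilde.continuous).sub hg)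
    have hmemB : ∀ x : X, x ∉ A → x ∈ B := by
      intro x hx
      have : x ∈ A ∪ B := hAB ▸ Set.mem_univ x
      exact ((Set.mem_union _ _ _).mp this).resolve_left hx
    refine ⟨h, hhc, ?_, ?_⟩
    · intro x
      by_cases hx : x ∈ A
      · simp [hh, hψ0 x hx, hgA x hx]
      · have hxB : x ∈ B := hmemB x hx
        have hct' : ctilde x = c ⟨x, hxB⟩ := hctB ⟨x, hxB⟩
        have hkey : ‖r x • ctilde x - g x‖ < r x := by rw [hct']; exact key ⟨x, hxB⟩
        rcases eq_or_lt_of_le (hψle x) with hone | hlt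
        · -- ψ x = 1 : h x = r x • c x ≠ 0
          have : h x = r x • ctilde x := by
            show g x + ψ x • (r x • ctilde x - g x) = _
            rw [hone, one_smul]
            abel
          rw [this, hct']
          exact smul_ne_zero (hrpos x).ne' (hc0 _)
        · -- ψ x < 1
          have hψx : ψ x = D x / r x := by
            rcases min_cases (1 : ℝ) (D x / r x) with ⟨h1, _⟩ | ⟨h1, _⟩
            · exfalso; rw [hψ] at hlt; simp only at hlt; rw [h1] at hlt; exact lt_irrefl _ hlt
            · exact h1
          have hDr : D x < r x := by
            have : D x / r x < 1 := by rw [← hψx]; exact hlt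
            exact (div_lt_one (hrpos x)).mp this
          have hDg : D x < ‖g x‖ := by
            by_contra hcon
            push_neg at hcon
            have : r x ≤ D x := le_trans (min_le_right _ _) (by rw [max_eq_right hcon])
            linarith
          have hsmall : ‖ψ x • (r x • ctilde x - g x)‖ < ‖g x‖ := by
            rw [norm_smul, Real.norm_of_nonneg (hψnn x), hψx]
            calc D x / r x * ‖r x • ctilde x - g x‖
                ≤ D x / r x * r x := by
                  apply mul_le_mul_of_nonneg_left hkey.le
                  exact div_nonneg (hDnn x) (hrpos x).le
              _ = D x := div_mul_cancel₀ _ (hrpos x).ne'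
              _ < ‖g x‖ := hDg
          intro hzero
          rw [hh] at hzero
          simp only at hzero
          have hv : ψ x • (r x • ctilde x - g x) = -g x := by
            rw [eq_neg_iff_add_eq_zero, add_comm]; exact hzero
          rw [hv, norm_neg] at hsmall
          exact lt_irrefl _ hsmall
    · intro x
      by_cases hx : x ∈ A
      · simp [hh, hψ0 x hx, hε]
      · have hxB : x ∈ B := hmemB x hx
        have hct' : ctilde x = c ⟨x, hxB⟩ := hctB ⟨x, hxB⟩
        have hkey : ‖r x • ctilde x - g x‖ < r x := by rw [hct']; exact key ⟨x, hxB⟩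
        have : ‖h x - g x‖ = ψ x * ‖r x • ctilde x - g x‖ := by
          rw [hh]
          simp only [add_sub_cancel_left, norm_smul, Real.norm_of_nonneg (hψnn x)]
        rw [this]
        calc ψ x * ‖r x • ctilde x - g x‖
            ≤ 1 * ‖r x • ctilde x - g x‖ :=
              mul_le_mul_of_nonneg_right (hψle x) (norm_nonneg _)
          _ = ‖r x • ctilde x - g x‖ := one_mul _
          _ < r x := hkey
          _ ≤ ε / 2 := hrle x
          _ < ε := by linarith
end

section
/- Let n ≥ 1 and N ≥ 1 be integers. Let K be a simplicial complex in ℝᴺ (a geometric simplicial complex: a collection of geometric simplices, closed under taking faces, such that the intersection of any two simplices of K is a face of each, and such that the family of simplices is locally finite in ℝᴺ), all of whose simplices have dimension at most n−1 (i.e., every face is the convex hull of at most n affinely independent points). Let B = |K| ⊆ ℝᴺ be the polytope of K (the union of its simplices). Then every continuous map f : B → ℝⁿ is a uniform limit of continuous zero-free maps: for every ε > 0 there exists a continuous g : B → ℝⁿ with g(x) ≠ 0 for all x ∈ B and sup_{x ∈ B} |f(x) − g(x)| < ε. -/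
open Geometry Set Metric
open scoped Manifold ENNReal NNReal

/-- The convex hull of a nonempty finite set has Hausdorff dimension at most
its cardinality minus one. -/
lemma dimH_convexHull_finset_le {E : Type*} [NormedAddCommGroup E] [NormedSpace ℝ E]
    [FiniteDimensional ℝ E] (s : Finset E) (hs : s.Nonempty) :
    dimH (convexHull ℝ (s : Set E)) ≤ (s.card - 1 : ℕ) := by
  classical
  obtain ⟨p₀, hp₀⟩ := hs
  set V : Submodule ℝ E := vectorSpan ℝ (s : Set E) with hV
  have hsub : convexHull ℝ (s : Set E) ⊆ (fun v => v + p₀) '' (V : Set E) := by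
    intro x hx
    have hx' : x ∈ affineSpan ℝ (s : Set E) := convexHull_subset_affineSpan _ hx
    have hp₀' : p₀ ∈ affineSpan ℝ (s : Set E) := mem_affineSpan ℝ (by exact_mod_cast hp₀)
    have hmem : x -ᵥ p₀ ∈ (affineSpan ℝ (s : Set E)).direction :=
      AffineSubspace.vsub_mem_direction hx' hp₀'
    rw [direction_affineSpan] at hmem
    exact ⟨x - p₀, hmem, sub_add_cancel x p₀⟩
  have hrank : Module.finrank ℝ V ≤ s.card - 1 := by
    have hcard : s.card = (s.card - 1) + 1 :=
      (Nat.succ_pred_eq_of_pos (Finset.card_pos.2 ⟨p₀, hp₀⟩)).symm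
    have h := finrank_vectorSpan_image_finset_le ℝ (id : E → E) s hcard
    rwa [Finset.image_id] at h
  calc dimH (convexHull ℝ (s : Set E)) ≤ dimH ((fun v => v + p₀) '' (V : Set E)) :=
        dimH_mono hsub
    _ = dimH (V : Set E) :=
        Isometry.dimH_image (Isometry.of_dist_eq fun a b => dist_add_right a b p₀) _
    _ = dimH (((↑) : V → E) '' (univ : Set V)) := by rw [image_univ, Subtype.range_coe]
    _ = dimH (univ : Set V) := Isometry.dimH_image isometry_subtype_coe _
    _ = Module.finrank ℝ V := Real.dimH_univ_eq_finrank V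
    _ ≤ (s.card - 1 : ℕ) := Nat.cast_le.2 hrank

/-- If `K` is a locally finite geometric simplicial complex in `ℝᴺ` all of whose
simplices have dimension at most `n - 1` (i.e. every face has at most `n`
vertices), then every continuous map from the polytope `|K|` to `ℝⁿ` is a
uniform limit of continuous zero-free maps. -/
theorem zeroFree_approximation_of_low_dim_polytope (n N : ℕ) (hn : 1 ≤ n) (hN : 1 ≤ N)
    (K : SimplicialComplex ℝ (EuclideanSpace ℝ (Fin N)))
    (hlf : LocallyFinite fun s : K.faces =>
      convexHull ℝ ((s : Finset (EuclideanSpace ℝ (Fin N))) : Set (EuclideanSpace ℝ (Fin N))))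
    (hdim : ∀ s ∈ K.faces, s.card ≤ n)
    (f : K.space → EuclideanSpace ℝ (Fin n)) (hf : Continuous f)
    (ε : ℝ) (hε : 0 < ε) :
    ∃ g : K.space → EuclideanSpace ℝ (Fin n), Continuous g ∧ (∀ x : K.space, g x ≠ 0) ∧
      ∀ x : K.space, ‖f x - g x‖ < ε := by
  classical
  let E := EuclideanSpace ℝ (Fin N)
  let F' := EuclideanSpace ℝ (Fin n)
  have hne : ∀ s : K.faces, ((s : Finset E) : Set E).Nonempty := by
    rintro ⟨s, hs⟩
    have : s ≠ ∅ := fun h => K.empty_notMem (h ▸ hs)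
    exact_mod_cast Finset.nonempty_of_ne_empty this
  have hspace : K.space = ⋃ s : K.faces, convexHull ℝ ((s : Finset E) : Set E) := by
    simp [SimplicialComplex.space, Set.iUnion_subtype]
  haveI hcnt : Countable K.faces := by
    have := hlf.countable_univ fun s => ((hne s).mono (subset_convexHull ℝ _))
    exact Set.countable_univ_iff.1 this
  have hclosed : IsClosed K.space := by
    rw [hspace]
    exact hlf.isClosed_iUnion fun s =>
      ((s : Finset E).finite_toSet.isCompact_convexHull ℝ).isClosed
  -- Tietze extension of `f`
  obtain ⟨F, hF⟩ := ContinuousMap.exists_restrict_eq (X := E) hclosed (ContinuousMap.mk f hf)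
  have hFf : ∀ x : K.space, F x = f x := fun x => ContinuousMap.congr_fun hF x
  -- smooth approximation of `F` within `ε/2`
  obtain ⟨G, hG⟩ := exists_contMDiffMap_forall_mem_convex_of_local_const
    (𝓘(ℝ, E)) (n := (⊤ : ℕ∞)) (t := fun x => ball (F x) (ε / 2))
    (fun x => convex_ball _ _)
    (fun x => ⟨F x, by
      filter_upwards [F.continuous.continuousAt.preimage_mem_nhds
        (ball_mem_nhds (F x) (half_pos hε))] with y hy
      have h' : dist (F y) (F x) < ε / 2 := by simpa [mem_ball] using hy
      simpa [mem_ball, dist_comm] using h'⟩)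
  have hGsm := contMDiff_iff_contDiff.mp G.contMDiff
  have hG1 : ContDiff ℝ 1 (G : E → F') := hGsm.of_le (by exact_mod_cast le_top)
  -- the image of the space has small Hausdorff dimension
  have himg : dimH ((G : E → F') '' K.space) ≤ ((n - 1 : ℕ) : ℝ≥0∞) := by
    rw [hspace, image_iUnion, dimH_iUnion]
    refine iSup_le fun s => ?_
    have h1 : dimH ((G : E → F') '' convexHull ℝ ((s : Finset E) : Set E)) ≤
        dimH (convexHull ℝ ((s : Finset E) : Set E)) := by
      refine dimH_image_le_of_locally_lipschitzOn fun x _ => ?_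
      obtain ⟨C, t, ht, hlip⟩ := hG1.contDiffAt.exists_lipschitzOnWith
      exact ⟨C, t, nhdsWithin_le_nhds ht, hlip⟩
    refine h1.trans ((dimH_convexHull_finset_le _ ?_).trans (Nat.cast_le.2 ?_))
    · exact_mod_cast hne s
    · have := hdim s s.2
      omega
  -- find a small value `c` missed by `G` on the space
  have hball : dimH (ball (0 : F') (ε / 2)) = (n : ℝ≥0∞) := by
    rw [Real.dimH_of_mem_nhds (ball_mem_nhds _ (by positivity))]
    simp [F', finrank_euclideanSpace_fin]
  have hnsub : ¬ ball (0 : F') (ε / 2) ⊆ (G : E → F') '' K.space := by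
    intro hsub
    have h2 := (dimH_mono hsub).trans himg
    rw [hball] at h2
    have h3 : n ≤ n - 1 := Nat.cast_le.1 h2
    omega
  obtain ⟨c, hcb, hcn⟩ := not_subset.1 hnsub
  refine ⟨fun x => G ↑x - c, ?_, ?_, ?_⟩
  · exact (hGsm.continuous.comp continuous_subtype_val).sub continuous_const
  · intro x
    refine sub_ne_zero.2 fun h => hcn ⟨↑x, x.2, h⟩
  · intro x
    have h1 : dist (G ↑x) (F ↑x) < ε / 2 := mem_ball.1 (hG ↑x)
    have h2 : ‖c‖ < ε / 2 := mem_ball_zero_iff.1 hcb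
    have heq : f x - (G ↑x - c) = (F ↑x - G ↑x) + c := by rw [hFf x]; abel
    calc ‖f x - (G ↑x - c)‖ = ‖(F ↑x - G ↑x) + c‖ := by rw [heq]
      _ ≤ ‖F ↑x - G ↑x‖ + ‖c‖ := norm_add_le _ _
      _ < ε / 2 + ε / 2 := by
          have : ‖F ↑x - G ↑x‖ = dist (G ↑x) (F ↑x) := by rw [dist_eq_norm, norm_sub_rev]
          rw [this]; exact add_lt_add h1 h2
      _ = ε := by ring
end

section
/- Let X be a metrizable topological space, A a closed subset of X, g : X → ℝⁿ a continuous map with g(x) ≠ 0 for all x ∈ A, and ε > 0. Then there exists a continuous map α : X → ℝⁿ with sup_{x ∈ X} |α(x)| ≤ ε/2 such that |g(x) + α(x)| ≥ ε/2 for all x ∈ A. -/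
/-- If `g : X → ℝⁿ` is continuous on a metrizable space `X` and zero-free on a
closed set `A`, then there is a continuous `α : X → ℝⁿ` with `‖α‖ ≤ ε/2`
everywhere such that `‖g + α‖ ≥ ε/2` on `A`. -/
theorem small_perturbation_bounded_away_from_zero {X : Type*} [TopologicalSpace X]
    [TopologicalSpace.MetrizableSpace X] (n : ℕ)
    (A : Set X) (hA : IsClosed A)
    (g : X → EuclideanSpace ℝ (Fin n)) (hg : Continuous g)
    (hgA : ∀ x ∈ A, g x ≠ 0) (ε : ℝ) (hε : 0 < ε) :
    ∃ α : X → EuclideanSpace ℝ (Fin n), Continuous α ∧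
      (∀ x : X, ‖α x‖ ≤ ε / 2) ∧ ∀ x ∈ A, ε / 2 ≤ ‖g x + α x‖ := by
  letI : MetricSpace X := TopologicalSpace.metrizableSpaceMetric X
  have _dummy : True := trivial
  have hε2 : (0 : ℝ) < ε / 2 := half_pos hε
  haveI := Metric.instTietzeExtensionClosedBall ℝ (0 : EuclideanSpace ℝ (Fin n)) hε2
  -- the correction on `A`
  have hcont : Continuous fun x : A => (max (ε / 2 / ‖g x.1‖) 1 - 1) • g x.1 := by
    have hne : ∀ x : A, ‖g x.1‖ ≠ 0 := fun x =>
      norm_ne_zero_iff.mpr (hgA x.1 x.2)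
    exact (((continuous_const.div ((hg.comp continuous_subtype_val).norm) hne).max
      continuous_const).sub continuous_const).smul (hg.comp continuous_subtype_val)
  let f : C(A, EuclideanSpace ℝ (Fin n)) := ⟨fun x => (max (ε / 2 / ‖g x.1‖) 1 - 1) • g x.1, hcont⟩
  have hf : ∀ x : A, f x ∈ Metric.closedBall (0 : EuclideanSpace ℝ (Fin n)) (ε / 2) := by
    intro x
    have hg0 : 0 < ‖g x.1‖ := norm_pos_iff.mpr (hgA x.1 x.2)
    simp only [Metric.mem_closedBall, dist_zero_right, f, ContinuousMap.coe_mk]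
    rw [norm_smul, Real.norm_eq_abs]
    rcases le_or_gt (ε / 2 / ‖g x.1‖) 1 with h | h
    · rw [max_eq_right h]
      simpa using hε2.le
    · rw [max_eq_left h.le, abs_of_nonneg (by linarith)]
      rw [sub_mul, div_mul_cancel₀ _ hg0.ne', one_mul]
      linarith
  obtain ⟨α, hmem, hres⟩ := ContinuousMap.exists_forall_mem_restrict_eq hA f hf
  refine ⟨α, α.continuous, fun x => by simpa using hmem x, fun x hx => ?_⟩
  have hαx : α x = (max (ε / 2 / ‖g x‖) 1 - 1) • g x := by
    have := congrFun (congrArg DFunLike.coe hres) ⟨x, hx⟩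
    simpa [f] using this
  have hg0 : 0 < ‖g x‖ := norm_pos_iff.mpr (hgA x hx)
  rw [hαx]
  have : g x + (max (ε / 2 / ‖g x‖) 1 - 1) • g x = (max (ε / 2 / ‖g x‖) 1) • g x := by
    rw [sub_smul, one_smul]; abel
  rw [this, norm_smul, Real.norm_eq_abs,
    abs_of_nonneg (le_trans zero_le_one (le_max_right _ _))]
  calc ε / 2 = (ε / 2 / ‖g x‖) * ‖g x‖ := by field_simp
    _ ≤ max (ε / 2 / ‖g x‖) 1 * ‖g x‖ :=
        mul_le_mul_of_nonneg_right (le_max_left _ _) hg0.le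
end
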